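/- arXiv:2503.07225 — 8 statements merged into one kernel-verified Lean document; each statement's English description precedes it below -/
import Mathlib

section
/- Let ρ be a positive integer and let h : ℝ → ℝ be continuous and 2π-periodic. Let M = {t ∈ [0, 2π] : h(t) = max_{s∈[0,2π]} h(s)} be its set of maximum points. If 0 lies in the convex hull of {e^{iρt} : t ∈ M}, then for every C ∈ ℂ one has max_{t∈[0,2π]} ( h(t) + Re(C e^{iρt}) ) ≥ max_{t∈[0,2π]} h(t). -/
/-! Since `0` lies in the convex hull of the points `e^{iρt}`, `t ∈ M`, the real linear functional
`z ↦ Re (C z)` cannot be negative at all of them; at a maximum point `t` of `h` where it is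
nonnegative, `h t + Re (C e^{iρt}) ≥ max h`. -/

open Real Complex Set

theorem exists_mem_nonneg_of_zero_mem_convexHull {E : Type*} [AddCommGroup E] [Module ℝ E]
    {s : Set E} (f : E →ₗ[ℝ] ℝ) (h0 : (0 : E) ∈ convexHull ℝ s) : ∃ x ∈ s, 0 ≤ f x := by
  simpa using (f.convexOn convex_univ).exists_ge_of_mem_convexHull (subset_univ s) h0

theorem sSup_image_le_sSup_image_add {α : Type*} {K : Set α} {f g : α → ℝ}
    (hbdd : BddAbove ((fun x => f x + g x) '' K)) {t : α} (ht : t ∈ K)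
    (hmax : f t = sSup (f '' K)) (hg : 0 ≤ g t) :
    sSup (f '' K) ≤ sSup ((fun x => f x + g x) '' K) :=
  calc sSup (f '' K) = f t := hmax.symm
    _ ≤ f t + g t := le_add_of_nonneg_right hg
    _ ≤ _ := le_csSup hbdd (mem_image_of_mem _ ht)

theorem stmt_2_general (ρ : ℕ) (h : ℝ → ℝ)
    (hcont : Continuous h)
    (M : Set ℝ)
    (hM : M = {t ∈ Icc 0 (2 * π) | h t = sSup (h '' Icc 0 (2 * π))})
    (hbal : (0 : ℂ) ∈ convexHull ℝ
      ((fun t : ℝ => Complex.exp ((ρ : ℂ) * (t : ℂ) * Complex.I)) '' M))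
    (C : ℂ) :
    sSup ((fun t : ℝ => h t + (C * Complex.exp ((ρ : ℂ) * (t : ℂ) * Complex.I)).re) ''
        Icc 0 (2 * π)) ≥ sSup (h '' Icc 0 (2 * π)) := by
  obtain ⟨_, ⟨t, htM, rfl⟩, hCt⟩ :=
    exists_mem_nonneg_of_zero_mem_convexHull (reLm ∘ₗ LinearMap.mulLeft ℝ C) hbal
  rw [hM] at htM
  have hbdd : BddAbove ((fun t : ℝ =>
      h t + (C * Complex.exp ((ρ : ℂ) * (t : ℂ) * Complex.I)).re) '' Icc 0 (2 * π)) :=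
    (isCompact_Icc.image_of_continuousOn (by fun_prop)).bddAbove
  exact sSup_image_le_sSup_image_add hbdd htM.1 htM.2 hCt

theorem stmt_2 (ρ : ℕ) (hρ : 0 < ρ) (h : ℝ → ℝ)
    (hcont : Continuous h) (hper : Function.Periodic h (2 * π))
    (M : Set ℝ)
    (hM : M = {t ∈ Icc 0 (2 * π) | h t = sSup (h '' Icc 0 (2 * π))})
    (hbal : (0 : ℂ) ∈ convexHull ℝ
      ((fun t : ℝ => Complex.exp ((ρ : ℂ) * (t : ℂ) * Complex.I)) '' M))
    (C : ℂ) :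
    sSup ((fun t : ℝ => h t + (C * Complex.exp ((ρ : ℂ) * (t : ℂ) * Complex.I)).re) ''
        Icc 0 (2 * π)) ≥ sSup (h '' Icc 0 (2 * π)) :=
  stmt_2_general ρ h hcont M hM hbal C
end

section
/- Let ρ be a positive integer and let h : ℝ → ℝ be continuous and 2π-periodic, with maximum set M = {t : h(t) = max h}. Suppose 0 does NOT lie in the convex hull of {e^{iρt} : t ∈ M}. Then there exists C ∈ ℂ such that max_{t∈[0,2π]} ( h(t) + Re(C e^{iρt}) ) < max_{t∈[0,2π]} h(t). -/
open Real Complex Set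

/-!
The set `{e^{iρt} : t ∈ M}` is compact, so by Carathéodory its convex hull is compact, and
separating it from `0` gives `C` with `Re (C e^{iρt}) > 0` on `M`. Subtracting a small multiple
`ε Re (C e^{iρt})` then strictly lowers `h` on the part of `[0, 2π]` where this is positive, while
on the compact rest `h` already stays a fixed margin below its maximum, which small `ε` preserves.
The perturbed function attains its supremum, so the supremum drops.
-/

section ConvexHull

variable {E : Type*} [AddCommGroup E] [Module ℝ E]

theorem convexJoin_eq_image (s t : Set E) :
    convexJoin ℝ s t =
      (fun p : ℝ × E × E => (1 - p.1) • p.2.1 + p.1 • p.2.2) '' (Icc 0 1 ×ˢ s ×ˢ t) := by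
  ext z
  simp only [mem_convexJoin, segment_eq_image, mem_image, Prod.exists, mem_prod]
  constructor
  · rintro ⟨x, hx, y, hy, θ, hθ, rfl⟩
    exact ⟨θ, x, y, ⟨hθ, hx, hy⟩, rfl⟩
  · rintro ⟨θ, x, y, ⟨hθ, hx, hy⟩, rfl⟩
    exact ⟨x, hx, y, hy, θ, hθ, rfl⟩

theorem IsCompact.convexJoin [TopologicalSpace E] [ContinuousAdd E] [ContinuousSMul ℝ E]
    {s t : Set E} (hs : IsCompact s) (ht : IsCompact t) : IsCompact (convexJoin ℝ s t) := by
  rw [convexJoin_eq_image]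
  exact (isCompact_Icc.prod (hs.prod ht)).image (by fun_prop)

/-- `iterConvexJoin s n` is the set of convex combinations of `n + 1` points of `s`. -/
def iterConvexJoin (s : Set E) : ℕ → Set E
  | 0 => s
  | n + 1 => convexJoin ℝ s (iterConvexJoin s n)

theorem IsCompact.iterConvexJoin [TopologicalSpace E] [ContinuousAdd E] [ContinuousSMul ℝ E]
    {s : Set E} (hs : IsCompact s) (n : ℕ) : IsCompact (iterConvexJoin s n) := by
  induction n with
  | zero => exact hs
  | succ n ih => exact hs.convexJoin ih

theorem subset_iterConvexJoin (s : Set E) (n : ℕ) : s ⊆ iterConvexJoin s n := by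
  induction n with
  | zero => exact subset_rfl
  | succ n ih => exact fun x hx => segment_subset_convexJoin hx (ih hx) (left_mem_segment ℝ x x)

theorem iterConvexJoin_subset_convexHull (s : Set E) (n : ℕ) :
    iterConvexJoin s n ⊆ convexHull ℝ s := by
  induction n with
  | zero => exact subset_convexHull ℝ s
  | succ n ih => exact convexJoin_subset (subset_convexHull ℝ s) ih (convex_convexHull ℝ s)

theorem convexHull_finset_subset_iterConvexJoin {s : Set E} {t : Finset E} (hts : ↑t ⊆ s)
    {n : ℕ} (hn : t.card ≤ n + 1) : convexHull ℝ (t : Set E) ⊆ iterConvexJoin s n := by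
  classical
  induction t using Finset.induction_on generalizing n with
  | empty => simp
  | insert a t hat ih =>
    rw [Finset.coe_insert] at hts ⊢
    rw [Finset.card_insert_of_notMem hat] at hn
    have ha : a ∈ s := hts (mem_insert a _)
    rcases t.eq_empty_or_nonempty with rfl | ht
    · simpa using subset_iterConvexJoin s n ha
    obtain ⟨m, rfl⟩ : ∃ m, n = m + 1 := Nat.exists_eq_add_one.2 (by have := ht.card_pos; omega)
    rw [convexHull_insert (Finset.coe_nonempty.2 ht)]
    exact convexJoin_mono (singleton_subset_iff.2 ha)
      (ih ((subset_insert a _).trans hts) (by omega))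

theorem convexHull_eq_iterConvexJoin [FiniteDimensional ℝ E] (s : Set E) :
    convexHull ℝ s = iterConvexJoin s (Module.finrank ℝ E) := by
  refine (iterConvexJoin_subset_convexHull s _).antisymm' ?_
  rw [convexHull_eq_union]
  refine iUnion₂_subset fun t hts => iUnion_subset fun hind =>
    convexHull_finset_subset_iterConvexJoin hts ?_
  calc t.card = Fintype.card t := (Fintype.card_coe t).symm
    _ ≤ Module.finrank ℝ (vectorSpan ℝ (range ((↑) : t → E))) + 1 := hind.card_le_finrank_succ
    _ ≤ Module.finrank ℝ E + 1 := by gcongr; exact Submodule.finrank_le _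

theorem IsCompact.convexHull [TopologicalSpace E] [ContinuousAdd E] [ContinuousSMul ℝ E]
    [FiniteDimensional ℝ E] {s : Set E} (hs : IsCompact s) : IsCompact (convexHull ℝ s) := by
  rw [convexHull_eq_iterConvexJoin]
  exact hs.iterConvexJoin _

end ConvexHull

theorem Complex.exists_re_mul_pos_of_zero_notMem_convexHull {K : Set ℂ} (hK : IsCompact K)
    (h0 : (0 : ℂ) ∉ convexHull ℝ K) : ∃ C : ℂ, ∀ z ∈ K, 0 < (C * z).re := by
  obtain ⟨f, u, hf0, hfK⟩ :=
    geometric_hahn_banach_point_closed (convex_convexHull ℝ K) hK.convexHull.isClosed h0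
  refine ⟨starRingEnd ℂ ((InnerProductSpace.toDual ℝ ℂ).symm f), fun z hz => ?_⟩
  rw [mul_comm, ← Complex.inner, InnerProductSpace.toDual_symm_apply]
  exact (map_zero f ▸ hf0).trans (hfK z (subset_convexHull ℝ K hz))

theorem IsCompact.exists_sSup_image_sub_mul_lt {α : Type*} [TopologicalSpace α] {s : Set α}
    (hs : IsCompact s) (hne : s.Nonempty) {h g : α → ℝ} (hh : Continuous h) (hg : Continuous g)
    (hpos : ∀ t ∈ s, h t = sSup (h '' s) → 0 < g t) :
    ∃ ε > 0, sSup ((fun t => h t - ε * g t) '' s) < sSup (h '' s) := by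
  set S := sSup (h '' s)
  have hle : ∀ t ∈ s, h t ≤ S := fun t ht => le_csSup (hs.image hh).bddAbove (mem_image_of_mem h ht)
  obtain ⟨δ, hδ, hδle⟩ : ∃ δ > 0, ∀ t ∈ s, g t ≤ 0 → h t ≤ S - δ := by
    have hK : IsCompact (s ∩ {t | g t ≤ 0}) := hs.inter_right (isClosed_le hg continuous_const)
    rcases (s ∩ {t | g t ≤ 0}).eq_empty_or_nonempty with hK₀ | hK₀
    · exact ⟨1, one_pos, fun t ht hgt => (hK₀.subset ⟨ht, hgt⟩).elim⟩
    obtain ⟨t₀, ⟨ht₀, hgt₀⟩, hmax⟩ := hK.exists_isMaxOn hK₀ hh.continuousOn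
    have hlt : h t₀ < S := (hle t₀ ht₀).lt_of_ne fun heq => (hpos t₀ ht₀ heq).not_ge hgt₀
    exact ⟨S - h t₀, sub_pos.2 hlt, fun t ht hgt => by simpa using hmax ⟨ht, hgt⟩⟩
  obtain ⟨B, hB⟩ := hs.exists_bound_of_continuousOn hg.continuousOn
  set ε := δ / (|B| + 1)
  have hε : 0 < ε := by positivity
  have hεB : ε * (|B| + 1) = δ := div_mul_cancel₀ δ (by positivity)
  refine ⟨ε, hε, ?_⟩
  rw [hs.sSup_lt_iff_of_continuous hne (by fun_prop)]
  intro t ht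
  rcases le_or_gt (g t) 0 with hgt | hgt
  · have hgB : -|B| ≤ g t := (abs_le.1 ((hB t ht).trans (le_abs_self B))).1
    linarith [hδle t ht hgt, mul_le_mul_of_nonneg_left hgB hε.le]
  · linarith [hle t ht, mul_pos hε hgt]

theorem stmt_3_general (ρ : ℕ) (h : ℝ → ℝ)
    (hcont : Continuous h)
    (M : Set ℝ)
    (hM : M = {t : ℝ | h t = sSup (h '' Icc 0 (2 * π))})
    (hbal : (0 : ℂ) ∉ convexHull ℝ
      ((fun t : ℝ => Complex.exp ((ρ : ℂ) * (t : ℂ) * Complex.I)) '' M)) :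
    ∃ C : ℂ,
      sSup ((fun t : ℝ => h t + (C * Complex.exp ((ρ : ℂ) * (t : ℂ) * Complex.I)).re) ''
        Icc 0 (2 * π)) < sSup (h '' Icc 0 (2 * π)) := by
  set e : ℝ → ℂ := fun t => Complex.exp ((ρ : ℂ) * (t : ℂ) * Complex.I)
  have hK : IsCompact (e '' (M ∩ Icc 0 (2 * π))) :=
    (isCompact_Icc.inter_left (hM ▸ isClosed_eq hcont continuous_const)).image (by fun_prop)
  obtain ⟨C, hC⟩ := exists_re_mul_pos_of_zero_notMem_convexHull hK
    fun h0 => hbal (convexHull_mono (image_mono inter_subset_left) h0)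
  obtain ⟨ε, -, hlt⟩ := isCompact_Icc.exists_sSup_image_sub_mul_lt (nonempty_Icc.2 (by positivity))
    hcont (g := fun t => (C * e t).re) (by fun_prop)
    fun t ht hmax => hC (e t) (mem_image_of_mem e ⟨hM ▸ hmax, ht⟩)
  refine ⟨-(ε : ℂ) * C, ?_⟩
  convert hlt using 4 with t
  rw [mul_assoc, ← ofReal_neg, re_ofReal_mul]
  ring

theorem stmt_3 (ρ : ℕ) (hρ : 0 < ρ) (h : ℝ → ℝ)
    (hcont : Continuous h) (hper : Function.Periodic h (2 * π))
    (M : Set ℝ)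
    (hM : M = {t : ℝ | h t = sSup (h '' Icc 0 (2 * π))})
    (hbal : (0 : ℂ) ∉ convexHull ℝ
      ((fun t : ℝ => Complex.exp ((ρ : ℂ) * (t : ℂ) * Complex.I)) '' M)) :
    ∃ C : ℂ,
      sSup ((fun t : ℝ => h t + (C * Complex.exp ((ρ : ℂ) * (t : ℂ) * Complex.I)).re) ''
        Icc 0 (2 * π)) < sSup (h '' Icc 0 (2 * π)) :=
  stmt_3_general ρ h hcont M hM hbal
end

section
/- Let ρ > 0 and let α, β, γ be real numbers satisfying α < γ − π/ρ < β < α + π/ρ < γ. Put β* = α + π/ρ. Then sin(ρ(γ−β)/2) + sin(ρ(β−α)/2) ≥ sin(ρ(γ−β*)/2) + sin(ρ(β*−α)/2); equivalently, cos(ρ(α+γ−2β)/4) ≥ cos(ρ(α+γ−2β*)/4). -/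
/-!
By sum-to-product, `sin (ρ(γ-b)/2) + sin (ρ(b-α)/2) = 2 sin (ρ(γ-α)/4) cos (ρ(α+γ-2b)/4)`, and the
first factor is nonnegative, so both claims reduce to the cosine inequality. With `x = ρ(γ-α)/4 ∈ (π/4, π/2)`,
the hypotheses give `|ρ(α+γ-2β)/4| ≤ π/2 - x = |ρ(α+γ-2β*)/4|`, and `cos` decreases in `|·|` on `[-π, π]`.
-/

open Real

theorem cos_le_cos_of_abs_le_abs {x y : ℝ} (hx : |x| ≤ π) (hyx : |y| ≤ |x|) : cos x ≤ cos y := by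
  rw [← cos_abs x, ← cos_abs y]
  exact cos_le_cos_of_nonneg_of_le_pi (abs_nonneg y) hx hyx

theorem sin_add_sin_eq_sin_mul_cos (ρ a b c : ℝ) :
    sin (ρ * (c - b) / 2) + sin (ρ * (b - a) / 2)
      = 2 * sin (ρ * (c - a) / 4) * cos (ρ * (a + c - 2 * b) / 4) := by
  rw [sin_add_sin]
  ring_nf

theorem stmt_9_general (ρ : ℝ) (hρ : 0 < ρ) (α β γ : ℝ)
    (h1 : α < γ - π / ρ) (h2 : γ - π / ρ < β) (h3 : β < α + π / ρ)
    (βs : ℝ) (hβs : βs = α + π / ρ) :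
    Real.sin (ρ * (γ - β) / 2) + Real.sin (ρ * (β - α) / 2)
      ≥ Real.sin (ρ * (γ - βs) / 2) + Real.sin (ρ * (βs - α) / 2) ∧
    Real.cos (ρ * (α + γ - 2 * β) / 4) ≥ Real.cos (ρ * (α + γ - 2 * βs) / 4) := by
  have hρπ : ρ * (π / ρ) = π := mul_div_cancel₀ π hρ.ne'
  have hx_gt : π / 4 < ρ * (γ - α) / 4 := by nlinarith [mul_lt_mul_of_pos_left h1 hρ]
  have hx_lt : ρ * (γ - α) / 4 < π / 2 := by nlinarith [mul_lt_mul_of_pos_left (h2.trans h3) hρ]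
  have hβs' : ρ * (α + γ - 2 * βs) / 4 = ρ * (γ - α) / 4 - π / 2 := by
    rw [hβs]; linear_combination (-1 / 2 : ℝ) * hρπ
  have hcos : cos (ρ * (α + γ - 2 * βs) / 4) ≤ cos (ρ * (α + γ - 2 * β) / 4) := by
    rw [hβs']
    apply cos_le_cos_of_abs_le_abs
    · rw [abs_of_neg (by linarith)]; linarith
    · rw [abs_of_neg (by linarith : ρ * (γ - α) / 4 - π / 2 < 0), abs_le]
      constructor
      · nlinarith [mul_lt_mul_of_pos_left h3 hρ]
      · nlinarith [mul_lt_mul_of_pos_left h2 hρ]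
  have hsin : 0 ≤ sin (ρ * (γ - α) / 4) := sin_nonneg_of_nonneg_of_le_pi (by linarith) (by linarith)
  refine ⟨?_, hcos⟩
  rw [sin_add_sin_eq_sin_mul_cos, sin_add_sin_eq_sin_mul_cos]
  exact mul_le_mul_of_nonneg_left hcos (by linarith)

theorem stmt_9 (ρ : ℝ) (hρ : 0 < ρ) (α β γ : ℝ)
    (h1 : α < γ - π / ρ) (h2 : γ - π / ρ < β) (h3 : β < α + π / ρ) (h4 : α + π / ρ < γ)
    (βs : ℝ) (hβs : βs = α + π / ρ) :
    Real.sin (ρ * (γ - β) / 2) + Real.sin (ρ * (β - α) / 2)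
      ≥ Real.sin (ρ * (γ - βs) / 2) + Real.sin (ρ * (βs - α) / 2) ∧
    Real.cos (ρ * (α + γ - 2 * β) / 4) ≥ Real.cos (ρ * (α + γ - 2 * βs) / 4) :=
  stmt_9_general ρ hρ α β γ h1 h2 h3 βs hβs
end

section
/- Let ρ > 0 and let h : ℝ → ℝ be twice continuously differentiable with h''(t) + ρ² h(t) ≥ 0 for all t. Then for every x ∈ ℝ, ∫_x^{x + 2π/ρ} h(t) dt ≥ 0. -/
/-! Integrate `(h'' + ρ² h)(t) · (1 - cos ρ(t - x)) ≥ 0` over one period `[x, x + 2π/ρ]`.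
The weight vanishes to first order at both endpoints, so integrating by parts twice moves both
derivatives onto it without boundary terms; since `(1 - cos ρ(t - x))'' = ρ² cos ρ(t - x)`, the
integral equals `ρ² ∫ h`. Concretely, with `w t = 1 - cos ρ(t - x)`, the function `h' w - h w'`
is a primitive of `(h'' + ρ² h) w - ρ² h` and vanishes at both endpoints. -/

open Real intervalIntegral

theorem hasDerivAt_deriv_mul_one_sub_cos_sub_mul_sin {h : ℝ → ℝ} {ρ a t : ℝ}
    (hh : DifferentiableAt ℝ h t) (hh' : DifferentiableAt ℝ (deriv h) t) :
    HasDerivAt (fun s ↦ deriv h s * (1 - cos (ρ * (s - a))) - h s * (ρ * sin (ρ * (s - a))))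
      ((deriv (deriv h) t + ρ ^ 2 * h t) * (1 - cos (ρ * (t - a))) - ρ ^ 2 * h t) t := by
  have hlin : HasDerivAt (fun s ↦ ρ * (s - a)) ρ t := by
    simpa using ((hasDerivAt_id t).sub_const a).const_mul ρ
  have hweight : HasDerivAt (fun s ↦ 1 - cos (ρ * (s - a))) (ρ * sin (ρ * (t - a))) t :=
    (((hasDerivAt_cos _).comp t hlin).const_sub 1).congr_deriv (by ring)
  have hweight' : HasDerivAt (fun s ↦ ρ * sin (ρ * (s - a))) (ρ ^ 2 * cos (ρ * (t - a))) t :=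
    (((hasDerivAt_sin _).comp t hlin).const_mul ρ).congr_deriv (by ring)
  refine ((hh'.hasDerivAt.mul hweight).sub (hh.hasDerivAt.mul hweight')).congr_deriv ?_
  ring

theorem integral_deriv_deriv_add_mul_one_sub_cos {h : ℝ → ℝ} {ρ : ℝ} (hρ : ρ ≠ 0)
    (hsm : ContDiff ℝ 2 h) (a : ℝ) :
    ∫ t in a..a + 2 * π / ρ, (deriv (deriv h) t + ρ ^ 2 * h t) * (1 - cos (ρ * (t - a)))
      = ρ ^ 2 * ∫ t in a..a + 2 * π / ρ, h t := by
  have hh' : ContDiff ℝ 1 (deriv h) := hsm.deriv'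
  have hcont : Continuous h := hsm.continuous
  have hcont'' : Continuous (deriv (deriv h)) := hh'.continuous_deriv_one
  have hftc := integral_eq_sub_of_hasDerivAt
    (fun t _ ↦ hasDerivAt_deriv_mul_one_sub_cos_sub_mul_sin (ρ := ρ) (a := a)
      (hsm.differentiable two_ne_zero t) (hh'.differentiable one_ne_zero t))
    ((by fun_prop : Continuous fun t ↦
      (deriv (deriv h) t + ρ ^ 2 * h t) * (1 - cos (ρ * (t - a))) - ρ ^ 2 * h t).intervalIntegrable
      a (a + 2 * π / ρ))
  have hperiod : ρ * (a + 2 * π / ρ - a) = 2 * π := by field_simp; ring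
  rw [integral_sub ((by fun_prop : Continuous fun t ↦
      (deriv (deriv h) t + ρ ^ 2 * h t) * (1 - cos (ρ * (t - a)))).intervalIntegrable _ _)
    ((by fun_prop : Continuous fun t ↦ ρ ^ 2 * h t).intervalIntegrable _ _),
    integral_const_mul] at hftc
  simp only [hperiod, sub_self, mul_zero, cos_two_pi, cos_zero, sin_two_pi, sin_zero] at hftc
  linarith

theorem stmt_10 (ρ : ℝ) (hρ : 0 < ρ) (h : ℝ → ℝ)
    (hsm : ContDiff ℝ 2 h)
    (hconv : ∀ t : ℝ, 0 ≤ deriv (deriv h) t + ρ ^ 2 * h t)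
    (x : ℝ) :
    0 ≤ ∫ t in x..(x + 2 * π / ρ), h t := by
  have hle : x ≤ x + 2 * π / ρ := le_add_of_nonneg_right (by positivity)
  have hweighted : 0 ≤ ρ ^ 2 * ∫ t in x..(x + 2 * π / ρ), h t := by
    rw [← integral_deriv_deriv_add_mul_one_sub_cos hρ.ne' hsm x]
    exact integral_nonneg hle fun t _ ↦ mul_nonneg (hconv t) (sub_nonneg.mpr (cos_le_one _))
  exact nonneg_of_mul_nonneg_right hweighted (by positivity)
end

section
/- Let h : ℝ → ℝ be twice continuously differentiable, 2π-periodic, and satisfy h''(t) + (1/4) h(t) ≥ 0 for all t. Then h(t) ≥ 0 for all t. -/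
/-! For `ρ > 0` the function `F s = h' s * sin (ρ (s - t)) - ρ * h s * cos (ρ (s - t))` has derivative
`(h'' s + ρ² h s) * sin (ρ (s - t))`, which is nonnegative on `[t, t + π / ρ]`. Comparing `F` at the two
endpoints gives `h t + h (t + π / ρ) ≥ 0`; for `ρ = 1/2` the shift is `2π`, and periodicity gives `2 h t ≥ 0`. -/

open Real

section TrigConvex

variable {h : ℝ → ℝ}

theorem hasDerivAt_deriv_mul_sin_sub_mul_cos (hd : Differentiable ℝ h)
    (hd' : Differentiable ℝ (deriv h)) (ρ t s : ℝ) :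
    HasDerivAt (fun s => deriv h s * sin (ρ * (s - t)) - ρ * h s * cos (ρ * (s - t)))
      ((deriv (deriv h) s + ρ ^ 2 * h s) * sin (ρ * (s - t))) s := by
  have harg : HasDerivAt (fun s => ρ * (s - t)) ρ s := by
    simpa using ((hasDerivAt_id s).sub_const t).const_mul ρ
  exact (((hd' s).hasDerivAt.mul harg.sin).sub
    (((hd s).hasDerivAt.const_mul ρ).mul harg.cos)).congr_deriv (by ring)

theorem apply_add_apply_add_pi_div_nonneg {ρ : ℝ} (hρ : 0 < ρ) (hd : Differentiable ℝ h)
    (hd' : Differentiable ℝ (deriv h)) (hconv : ∀ s, 0 ≤ deriv (deriv h) s + ρ ^ 2 * h s)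
    (t : ℝ) : 0 ≤ h t + h (t + π / ρ) := by
  set F := fun s => deriv h s * sin (ρ * (s - t)) - ρ * h s * cos (ρ * (s - t))
  have hF := hasDerivAt_deriv_mul_sin_sub_mul_cos hd hd' ρ t
  have hπρ : 0 < π / ρ := div_pos pi_pos hρ
  have hmono : MonotoneOn F (Set.Icc t (t + π / ρ)) := by
    refine monotoneOn_of_deriv_nonneg (convex_Icc _ _)
      (fun s _ => (hF s).continuousAt.continuousWithinAt)
      (fun s _ => (hF s).differentiableAt.differentiableWithinAt) fun s hs => ?_
    rw [interior_Icc] at hs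
    rw [(hF s).deriv]
    exact mul_nonneg (hconv s) (sin_nonneg_of_nonneg_of_le_pi
      (mul_nonneg hρ.le (by linarith [hs.1])) ((le_div_iff₀' hρ).mp (by linarith [hs.2])))
  have hle : F t ≤ F (t + π / ρ) :=
    hmono (Set.left_mem_Icc.mpr (by linarith)) (Set.right_mem_Icc.mpr (by linarith))
      (by linarith)
  have hend : ρ * (t + π / ρ - t) = π := by field_simp; ring
  simp only [F, sub_self, mul_zero, sin_zero, cos_zero, hend, sin_pi, cos_pi] at hle
  exact (mul_nonneg_iff_of_pos_left hρ).mp (by linarith)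

end TrigConvex

theorem stmt_12 (h : ℝ → ℝ)
    (hsm : ContDiff ℝ 2 h)
    (hper : Function.Periodic h (2 * π))
    (hconv : ∀ t : ℝ, 0 ≤ deriv (deriv h) t + (1/4) * h t)
    (t : ℝ) :
    0 ≤ h t := by
  have hd : Differentiable ℝ h := hsm.differentiable (by norm_num)
  have hd' : Differentiable ℝ (deriv h) :=
    (hsm.iterate_deriv' 1 1).differentiable (by norm_num)
  have key := apply_add_apply_add_pi_div_nonneg (ρ := 1 / 2) (by norm_num) hd hd'
    (by norm_num; exact hconv) t
  rw [div_div_eq_mul_div, div_one, mul_comm, hper t] at key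
  linarith
end

section
/- Let ρ > 0 and let h : ℝ → ℝ be twice continuously differentiable with h''(t) + ρ² h(t) ≥ 0 for all t. Suppose h attains its global maximum M at a point θ₀ (so h(θ₀) = M and h'(θ₀) = 0). Then h(t) ≥ M·cos(ρ(t − θ₀)) for all t with |t − θ₀| ≤ π/(2ρ). -/
/-!
`F = h - M cos (ρ (· - θ₀))` satisfies `F'' + ρ² F = h'' + ρ² h ≥ 0` and `F θ₀ = F' θ₀ = 0`.
For such `F`, the Duhamel quantity `Q s = F s cos (ρ (t - s)) + F' s sin (ρ (t - s)) / ρ`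
has `Q θ₀ = 0`, `Q t = F t` and `Q' s = (F'' + ρ² F)(s) sin (ρ (t - s)) / ρ`, which is `≥ 0`
between `θ₀` and `t ≥ θ₀` as long as `ρ (t - θ₀) ≤ π`; reflecting `s ↦ -s` handles `t ≤ θ₀`.
Hence `F t ≥ 0` whenever `ρ |t - θ₀| ≤ π`, in particular for `|t - θ₀| ≤ π / (2ρ)`.
-/

open Real Set

section SturmComparison

variable {F F' F'' : ℝ → ℝ} {ρ a t : ℝ}

theorem hasDerivAt_duhamel (hρ : ρ ≠ 0) (hF : ∀ s, HasDerivAt F (F' s) s)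
    (hF' : ∀ s, HasDerivAt F' (F'' s) s) (s : ℝ) :
    HasDerivAt (fun s => F s * cos (ρ * (t - s)) + F' s / ρ * sin (ρ * (t - s)))
      ((F'' s + ρ ^ 2 * F s) * sin (ρ * (t - s)) / ρ) s := by
  have hinner : HasDerivAt (fun s => ρ * (t - s)) (-ρ) s := by
    simpa using ((hasDerivAt_id s).const_sub t).const_mul ρ
  refine (((hF s).mul ((hasDerivAt_cos _).comp s hinner)).add
    (((hF' s).div_const ρ).mul ((hasDerivAt_sin _).comp s hinner))).congr_deriv ?_
  simp only [Function.comp_apply]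
  field_simp
  ring

theorem sturm_comparison_nonneg_of_le (hρ : 0 < ρ) (hF : ∀ s, HasDerivAt F (F' s) s)
    (hF' : ∀ s, HasDerivAt F' (F'' s) s) (hconv : ∀ s ∈ Icc a t, 0 ≤ F'' s + ρ ^ 2 * F s)
    (ha : F a = 0) (ha' : F' a = 0) (hat : a ≤ t) (htπ : ρ * (t - a) ≤ π) : 0 ≤ F t := by
  set Q := fun s => F s * cos (ρ * (t - s)) + F' s / ρ * sin (ρ * (t - s))
  have hQ := hasDerivAt_duhamel (t := t) hρ.ne' hF hF'
  have hmono : MonotoneOn Q (Icc a t) := by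
    refine monotoneOn_of_deriv_nonneg (convex_Icc a t)
      (fun s _ => (hQ s).continuousAt.continuousWithinAt)
      (fun s _ => (hQ s).differentiableAt.differentiableWithinAt) fun s hs => ?_
    rw [interior_Icc] at hs
    rw [(hQ s).deriv]
    refine div_nonneg (mul_nonneg (hconv s (Ioo_subset_Icc_self hs)) ?_) hρ.le
    apply sin_nonneg_of_nonneg_of_le_pi
    · nlinarith [hs.2]
    · nlinarith [hs.1]
  simpa [Q, ha, ha'] using hmono (left_mem_Icc.mpr hat) (right_mem_Icc.mpr hat) hat

theorem sturm_comparison_nonneg (hρ : 0 < ρ) (hF : ∀ s, HasDerivAt F (F' s) s)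
    (hF' : ∀ s, HasDerivAt F' (F'' s) s) (hconv : ∀ s, 0 ≤ F'' s + ρ ^ 2 * F s)
    (ha : F a = 0) (ha' : F' a = 0) (htπ : ρ * |t - a| ≤ π) : 0 ≤ F t := by
  rcases le_total a t with hat | hta
  · rw [abs_of_nonneg (sub_nonneg.mpr hat)] at htπ
    exact sturm_comparison_nonneg_of_le hρ hF hF' (fun s _ => hconv s) ha ha' hat htπ
  · rw [abs_of_nonpos (sub_nonpos.mpr hta)] at htπ
    have hG : ∀ s, HasDerivAt (fun s => F (-s)) (-F' (-s)) s := fun s =>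
      ((hF (-s)).comp s (hasDerivAt_neg s)).congr_deriv (by ring)
    have hG' : ∀ s, HasDerivAt (fun s => -F' (-s)) (F'' (-s)) s := fun s =>
      ((hF' (-s)).comp s (hasDerivAt_neg s)).neg.congr_deriv (by ring)
    simpa using sturm_comparison_nonneg_of_le (a := -a) (t := -t) hρ hG hG'
      (fun s _ => hconv (-s)) (by simpa) (by simp [ha']) (neg_le_neg hta) (by linarith)

end SturmComparison

theorem stmt_14_general (ρ : ℝ) (hρ : 0 < ρ) (h : ℝ → ℝ)
    (hsm : ContDiff ℝ 2 h)
    (hconv : ∀ t : ℝ, 0 ≤ deriv (deriv h) t + ρ ^ 2 * h t)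
    (M θ₀ : ℝ) (hM : h θ₀ = M) (hd : deriv h θ₀ = 0)
    (t : ℝ) (ht : |t - θ₀| ≤ π / (2 * ρ)) :
    M * Real.cos (ρ * (t - θ₀)) ≤ h t := by
  obtain ⟨hh, -, hh'⟩ := contDiff_succ_iff_deriv.mp (show ContDiff ℝ (1 + 1) h from hsm)
  have hinner : ∀ s, HasDerivAt (fun s => ρ * (s - θ₀)) ρ s := fun s => by
    simpa using ((hasDerivAt_id s).sub_const θ₀).const_mul ρ
  have hF : ∀ s, HasDerivAt (fun s => h s - M * cos (ρ * (s - θ₀)))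
      (deriv h s + M * ρ * sin (ρ * (s - θ₀))) s := fun s =>
    ((hh s).hasDerivAt.sub (((hasDerivAt_cos _).comp s (hinner s)).const_mul M)).congr_deriv
      (by ring)
  have hF' : ∀ s, HasDerivAt (fun s => deriv h s + M * ρ * sin (ρ * (s - θ₀)))
      (deriv (deriv h) s + M * ρ ^ 2 * cos (ρ * (s - θ₀))) s := fun s =>
    ((hh'.differentiable one_ne_zero s).hasDerivAt.add
      (((hasDerivAt_sin _).comp s (hinner s)).const_mul (M * ρ))).congr_deriv (by ring)
  have hπ : ρ * |t - θ₀| ≤ π := by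
    calc ρ * |t - θ₀| ≤ ρ * (π / (2 * ρ)) := by gcongr
      _ ≤ π := by field_simp; linarith [pi_pos]
  have := sturm_comparison_nonneg hρ hF hF' (fun s => by convert hconv s using 1; ring)
    (by simp [hM]) (by simp [hd]) hπ
  linarith

theorem stmt_14 (ρ : ℝ) (hρ : 0 < ρ) (h : ℝ → ℝ)
    (hsm : ContDiff ℝ 2 h)
    (hconv : ∀ t : ℝ, 0 ≤ deriv (deriv h) t + ρ ^ 2 * h t)
    (M θ₀ : ℝ) (hmax : ∀ t : ℝ, h t ≤ M) (hM : h θ₀ = M) (hd : deriv h θ₀ = 0)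
    (t : ℝ) (ht : |t - θ₀| ≤ π / (2 * ρ)) :
    M * Real.cos (ρ * (t - θ₀)) ≤ h t :=
  stmt_14_general ρ hρ h hsm hconv M θ₀ hM hd t ht
end

section
/- Let ρ > 1 with ρ not an integer. Define h : [−π, π] → ℝ by h(t) = 2π cos(ρt) for |t| ≤ π/(2ρ) and h(t) = 0 otherwise; let τ = min(3π/(2ρ), π) and define k : [−π, π] → ℝ by k(t) = −π cos(ρt) for |t| ≤ τ and k(t) = 0 otherwise. Then max_{t∈[−π,π]} h(t) = 2π and max_{t∈[−π,π]} ( h(t) + k(t) ) = π. -/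
open Real Set

lemma ite_mul_cos_le {P : Prop} [Decidable P] {c : ℝ} (hc : 0 ≤ c) (x : ℝ) :
    (if P then c * cos x else 0) ≤ c := by
  split
  · nlinarith [cos_le_one x]
  · exact hc

/-- Where both terms are on they add up to `c * cos x`; where only the second is on, `cos x ≥ -1`
bounds it by `c`. -/
lemma ite_two_mul_cos_add_ite_neg_mul_cos_le {P Q : Prop} [Decidable P] [Decidable Q]
    (hPQ : P → Q) {c : ℝ} (hc : 0 ≤ c) (x : ℝ) :
    (if P then 2 * c * cos x else 0) + (if Q then -c * cos x else 0) ≤ c := by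
  by_cases hP : P
  · rw [if_pos hP, if_pos (hPQ hP)]
    nlinarith [cos_le_one x]
  · rw [if_neg hP, zero_add]
    split
    · nlinarith [neg_one_le_cos x]
    · exact hc

lemma pi_div_two_mul_le_min {ρ : ℝ} (hρ : 1 / 2 ≤ ρ) :
    π / (2 * ρ) ≤ min (3 * π / (2 * ρ)) π := by
  have hρ0 : 0 < 2 * ρ := by linarith
  refine le_min ?_ (div_le_self pi_pos.le (by linarith))
  gcongr
  linarith [pi_pos]

theorem stmt_16_general (ρ : ℝ) (hρ : 1 < ρ)
    (τ : ℝ) (hτ : τ = min (3 * π / (2 * ρ)) π)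
    (h k : ℝ → ℝ)
    (hh : ∀ t : ℝ, h t = if |t| ≤ π / (2 * ρ) then 2 * π * Real.cos (ρ * t) else 0)
    (hk : ∀ t : ℝ, k t = if |t| ≤ τ then -π * Real.cos (ρ * t) else 0) :
    IsGreatest (h '' Icc (-π) π) (2 * π) ∧
    IsGreatest ((fun t => h t + k t) '' Icc (-π) π) π := by
  have hπ : 0 ≤ π := pi_pos.le
  have hcenter : 0 ≤ π / (2 * ρ) := div_nonneg hπ (by linarith)
  have hsupp : π / (2 * ρ) ≤ τ := hτ ▸ pi_div_two_mul_le_min (by linarith)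
  have h0 : (0 : ℝ) ∈ Icc (-π) π := ⟨by linarith, hπ⟩
  refine ⟨⟨⟨0, h0, ?_⟩, ?_⟩, ⟨⟨0, h0, ?_⟩, ?_⟩⟩
  · simp [hh, hcenter]
  · rintro _ ⟨t, -, rfl⟩
    rw [hh]
    exact ite_mul_cos_le (by positivity) _
  · simp only [hh, hk, abs_zero, if_pos hcenter, if_pos (hcenter.trans hsupp), mul_zero, cos_zero]
    ring
  · rintro _ ⟨t, -, rfl⟩
    simp only [hh, hk]
    exact ite_two_mul_cos_add_ite_neg_mul_cos_le (fun ht => ht.trans hsupp) hπ _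

theorem stmt_16 (ρ : ℝ) (hρ : 1 < ρ) (hρn : ∀ n : ℤ, (n : ℝ) ≠ ρ)
    (τ : ℝ) (hτ : τ = min (3 * π / (2 * ρ)) π)
    (h k : ℝ → ℝ)
    (hh : ∀ t : ℝ, h t = if |t| ≤ π / (2 * ρ) then 2 * π * Real.cos (ρ * t) else 0)
    (hk : ∀ t : ℝ, k t = if |t| ≤ τ then -π * Real.cos (ρ * t) else 0) :
    IsGreatest (h '' Icc (-π) π) (2 * π) ∧
    IsGreatest ((fun t => h t + k t) '' Icc (-π) π) π :=
  stmt_16_general ρ hρ τ hτ h k hh hk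
end

section
/- Let ρ > 1/2 and let M ⊆ ℝ. Then the following are equivalent: (a) there exists θ* ∈ ℝ such that 0 lies in the convex hull of { e^{iρt} : t ∈ M ∩ [θ*, θ* + 2π/ρ] }; (b) there exist α, β, γ ∈ M with 0 < β − α ≤ π/ρ, 0 ≤ γ − β < π/ρ, and γ − α ≥ π/ρ. -/
open Real Complex Set

/-!
After the substitution `x = ρ t` everything is about angles `x` in a window of length `2π`.
If `0 = ∑ wᵢ e^{i xᵢ}` with `wᵢ > 0`, then `∑ wᵢ sin (xᵢ - v) = 0` for every `v`, so the points
never lie in a closed half-plane `{sin (· - v) ≥ 0}` except on its boundary line. Starting from the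
smallest angle `a`, this forces an angle `≥ a + π`; let `c` be the smallest one. Either some angle
`b ∈ (a, a + π]` satisfies `c - b < π`, or all angles lie in `[c - 2π, c - π] ∪ [c, c + π)`, and
then `c - π` is an angle. Conversely, `sin (c - b) e^{ia} + sin (a - c) e^{ib} + sin (b - a) e^{ic} = 0`
has nonnegative coefficients under the conditions of (b).
-/

/-- Condition (b), with `r = π / ρ`. -/
def IsBalancedTriple (r a b c : ℝ) : Prop :=
  0 < b - a ∧ b - a ≤ r ∧ 0 ≤ c - b ∧ c - b < r ∧ c - a ≥ r

lemma isBalancedTriple_mul_iff {ρ : ℝ} (hρ : 0 < ρ) (r a b c : ℝ) :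
    IsBalancedTriple r (ρ * a) (ρ * b) (ρ * c) ↔ IsBalancedTriple (r / ρ) a b c := by
  simp only [IsBalancedTriple, mul_comm ρ, ← sub_mul, le_div_iff₀ hρ, lt_div_iff₀ hρ, ge_iff_le,
    div_le_iff₀ hρ, mul_pos_iff_of_pos_right hρ, mul_nonneg_iff_of_pos_right hρ]

lemma IsBalancedTriple.subset_Icc {r a b c : ℝ} (h : IsBalancedTriple r a b c) :
    {a, b, c} ⊆ Icc a (a + 2 * r) := by
  obtain ⟨h₁, h₂, h₃, h₄, -⟩ := h
  simp only [insert_subset_iff, singleton_subset_iff, mem_Icc]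
  refine ⟨⟨le_rfl, ?_⟩, ⟨?_, ?_⟩, ?_, ?_⟩ <;> linarith

lemma Real.sin_nonneg_of_neg_two_pi_le {y : ℝ} (h₁ : -(2 * π) ≤ y) (h₂ : y ≤ π)
    (h : y ≤ -π ∨ 0 ≤ y) : 0 ≤ Real.sin y := by
  rcases h with h | h
  · rw [← Real.sin_add_two_pi]
    exact sin_nonneg_of_nonneg_of_le_pi (by linarith) (by linarith)
  · exact sin_nonneg_of_nonneg_of_le_pi h h₂

lemma Real.eq_neg_pi_of_sin_eq_zero {y : ℝ} (h₁ : -(2 * π) ≤ y) (h₂ : y < π)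
    (hs : Real.sin y = 0) (hc : Real.cos y ≠ 1) : y = -π := by
  obtain ⟨n, rfl⟩ := Real.sin_eq_zero_iff.1 hs
  have hn₁ : (-2 : ℤ) ≤ n := by
    exact_mod_cast le_of_mul_le_mul_right (by linarith : (-2 : ℝ) * π ≤ n * π) pi_pos
  have hn₂ : n < 1 := by
    exact_mod_cast lt_of_mul_lt_mul_right (by linarith : (n : ℝ) * π < 1 * π) pi_pos.le
  interval_cases n <;> simp_all

lemma sin_smul_exp_add_sin_smul_exp_add_sin_smul_exp (a b c : ℝ) :
    Real.sin (c - b) • exp (a * I) + Real.sin (a - c) • exp (b * I) +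
      Real.sin (b - a) • exp (c * I) = 0 := by
  apply Complex.ext <;>
    simp only [Complex.add_re, Complex.add_im, Complex.smul_re, Complex.smul_im,
      exp_ofReal_mul_I_re, exp_ofReal_mul_I_im, Real.sin_sub, Complex.zero_re, Complex.zero_im,
      smul_eq_mul] <;> ring

/-- No closed half-plane bounded by a line through `0` contains all `exp (x * I)`, `x ∈ T`,
unless they all lie on that line; and these points are not all equal. -/
def AngleBalanced (T : Set ℝ) : Prop :=
  (∀ v, (∀ x ∈ T, 0 ≤ Real.sin (x - v)) → ∀ x ∈ T, Real.sin (x - v) = 0) ∧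
    ∀ v, ∃ x ∈ T, Real.cos (x - v) ≠ 1

lemma sum_smul_exp_sub_mul_I {ι : Type*} (s : Finset ι) (w x : ι → ℝ) (v : ℝ) :
    ∑ i ∈ s, w i • exp (↑(x i - v) * I) = (∑ i ∈ s, w i • exp (x i * I)) * exp (-(v * I)) := by
  rw [Finset.sum_mul]
  refine Finset.sum_congr rfl fun i _ => ?_
  rw [smul_mul_assoc, ← Complex.exp_add]
  push_cast
  ring_nf

lemma angleBalanced_range_of_sum_smul_exp_eq_zero {ι : Type*} [Fintype ι] {w x : ι → ℝ}
    (hw : ∀ i, 0 < w i) (hw₁ : ∑ i, w i = 1) (h : ∑ i, w i • exp (x i * I) = 0) :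
    AngleBalanced (range x) := by
  have hrot : ∀ v, ∑ i, w i • exp (↑(x i - v) * I) = 0 := fun v => by
    rw [sum_smul_exp_sub_mul_I, h, zero_mul]
  constructor
  · intro v hv
    simp only [forall_mem_range] at hv ⊢
    have hsin : ∑ i, w i * Real.sin (x i - v) = 0 := by
      simpa only [Complex.im_sum, Complex.smul_im, exp_ofReal_mul_I_im, smul_eq_mul,
        Complex.zero_im] using congrArg im (hrot v)
    intro i
    have := (Finset.sum_eq_zero_iff_of_nonneg fun i _ => mul_nonneg (hw i).le (hv i)).1 hsin i
      (Finset.mem_univ i)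
    exact (mul_eq_zero.1 this).resolve_left (hw i).ne'
  · intro v
    by_contra! hcos
    simp only [forall_mem_range] at hcos
    have := congrArg re (hrot v)
    simp only [Complex.re_sum, Complex.smul_re, exp_ofReal_mul_I_re, hcos, smul_eq_mul, mul_one,
      hw₁, Complex.zero_re] at this
    exact one_ne_zero this

lemma exists_finite_angleBalanced_of_zero_mem_convexHull {S : Set ℝ}
    (h : (0 : ℂ) ∈ convexHull ℝ ((fun x : ℝ => exp (x * I)) '' S)) :
    ∃ T ⊆ S, T.Finite ∧ AngleBalanced T := by
  obtain ⟨ι, _, z, w, hzS, -, hw, hw₁, hsum⟩ := eq_pos_convex_span_of_mem_convexHull h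
  choose x hxS hx using fun i => hzS (mem_range_self i)
  obtain rfl : z = fun i => exp (x i * I) := funext fun i => (hx i).symm
  exact ⟨range x, range_subset_iff.2 hxS, finite_range x,
    angleBalanced_range_of_sum_smul_exp_eq_zero hw hw₁ hsum⟩

lemma AngleBalanced.sub_pi_mem {T : Set ℝ} (hT : AngleBalanced T) {c : ℝ}
    (hc : ∀ x ∈ T, c - 2 * π ≤ x ∧ x < c + π ∧ (x ≤ c - π ∨ c ≤ x)) : c - π ∈ T := by
  have hsin : ∀ x ∈ T, Real.sin (x - c) = 0 := hT.1 c fun x hx => by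
    obtain ⟨h₁, h₂, h₃⟩ := hc x hx
    exact Real.sin_nonneg_of_neg_two_pi_le (by linarith) (by linarith)
      (h₃.imp (fun h => by linarith) (fun h => by linarith))
  obtain ⟨x, hx, hcos⟩ := hT.2 c
  obtain ⟨h₁, h₂, -⟩ := hc x hx
  have := Real.eq_neg_pi_of_sin_eq_zero (by linarith) (by linarith) (hsin x hx) hcos
  convert hx using 1
  linarith

lemma zero_mem_convexHull_of_smul_add_smul_add_smul {E : Type*} [AddCommGroup E] [Module ℝ E]
    {x y z : E} {p q r : ℝ} (hp : 0 ≤ p) (hq : 0 ≤ q) (hr : 0 ≤ r) (hpqr : 0 < p + q + r)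
    (h : p • x + q • y + r • z = 0) : (0 : E) ∈ convexHull ℝ {x, y, z} := by
  have := Finset.centerMass_mem_convexHull Finset.univ (s := {x, y, z}) (w := ![p, q, r])
    (z := ![x, y, z]) (by simp [Fin.forall_fin_succ, hp, hq, hr])
    (by simpa [Fin.sum_univ_three] using hpqr) (by simp [Fin.forall_fin_succ])
  simpa [Finset.centerMass, Fin.sum_univ_three, h] using this

lemma zero_mem_convexHull_exp_of_isBalancedTriple {a b c : ℝ} (h : IsBalancedTriple π a b c) :
    (0 : ℂ) ∈ convexHull ℝ ((fun x : ℝ => exp (x * I)) '' {a, b, c}) := by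
  obtain ⟨h₁, h₂, h₃, h₄, h₅⟩ := h
  rw [image_insert_eq, image_insert_eq, image_singleton]
  have hcb : 0 ≤ Real.sin (c - b) := sin_nonneg_of_nonneg_of_le_pi h₃ h₄.le
  have hac : 0 ≤ Real.sin (a - c) :=
    Real.sin_nonneg_of_neg_two_pi_le (by linarith) (by linarith) (Or.inl (by linarith))
  rcases h₂.lt_or_eq with h₂ | h₂
  · have hba : 0 < Real.sin (b - a) := sin_pos_of_pos_of_lt_pi h₁ h₂
    exact zero_mem_convexHull_of_smul_add_smul_add_smul hcb hac hba.le (by linarith)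
      (sin_smul_exp_add_sin_smul_exp_add_sin_smul_exp a b c)
  · refine zero_mem_convexHull_of_smul_add_smul_add_smul zero_le_one zero_le_one le_rfl
      (by norm_num) ?_
    rw [show b = a + π by linarith]
    push_cast
    rw [add_mul, Complex.exp_add, exp_pi_mul_I]
    simp

lemma AngleBalanced.exists_isBalancedTriple {T : Set ℝ} {θ : ℝ} (hT : AngleBalanced T)
    (hfin : T.Finite) (hθ : T ⊆ Icc θ (θ + 2 * π)) :
    ∃ a ∈ T, ∃ b ∈ T, ∃ c ∈ T, IsBalancedTriple π a b c := by
  have hπ := pi_pos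
  obtain ⟨a, haT, ha⟩ := exists_min_image T id hfin (let ⟨x, hx, _⟩ := hT.2 0; ⟨x, hx⟩)
  simp only [id] at ha
  have hup : ∃ x ∈ T, a + π ≤ x := by
    by_contra! h
    have := ha _ (hT.sub_pi_mem (c := a) fun x hx => ⟨by linarith [ha x hx], h x hx,
      Or.inr (ha x hx)⟩)
    linarith
  obtain ⟨c, ⟨hcT, hac⟩, hc⟩ := exists_min_image {x ∈ T | a + π ≤ x} id
    (hfin.subset (sep_subset T _)) hup
  simp only [id, mem_sep_iff, and_imp] at hc
  by_cases hb : ∃ b ∈ T, a < b ∧ b ≤ a + π ∧ c - π < b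
  · obtain ⟨b, hbT, hab, hba, hcb⟩ := hb
    exact ⟨a, haT, b, hbT, c, hcT, by refine ⟨?_, ?_, ?_, ?_, ?_⟩ <;> linarith⟩
  push Not at hb
  have hac' : a + π < c := by
    by_contra! h
    linarith [hb c hcT (by linarith) h]
  have hcπ : c - π ∈ T := hT.sub_pi_mem fun x hx => by
    obtain ⟨hθx, hxθ⟩ := hθ hx
    have hθa := (hθ haT).1
    have hcθ := (hθ hcT).2
    rcases le_or_gt (a + π) x with hx' | hx'
    · have := hc x hx hx'
      exact ⟨by linarith, by linarith, Or.inr this⟩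
    · have hxc : x ≤ c - π := by
        rcases (ha x hx).eq_or_lt with rfl | hax
        · linarith
        · exact hb x hx hax hx'.le
      exact ⟨by linarith [ha x hx], by linarith, Or.inl hxc⟩
  exact ⟨c - π, hcπ, c, hcT, c, hcT, by refine ⟨?_, ?_, ?_, ?_, ?_⟩ <;> linarith⟩

theorem stmt_18 (ρ : ℝ) (hρ : 1/2 < ρ) (M : Set ℝ) :
    (∃ θs : ℝ, (0 : ℂ) ∈ convexHull ℝ
        ((fun t : ℝ => Complex.exp (Complex.I * (ρ : ℂ) * (t : ℂ))) ''
          (M ∩ Icc θs (θs + 2 * π / ρ)))) ↔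
    (∃ α β γ : ℝ, α ∈ M ∧ β ∈ M ∧ γ ∈ M ∧
      0 < β - α ∧ β - α ≤ π / ρ ∧ 0 ≤ γ - β ∧ γ - β < π / ρ ∧ γ - α ≥ π / ρ) := by
  have hρ₀ : 0 < ρ := by linarith
  have hexp : (fun t : ℝ => exp (I * ρ * t)) = (fun x : ℝ => exp (x * I)) ∘ (ρ * ·) := by
    ext t
    simp only [Function.comp_apply, ofReal_mul]
    ring_nf
  simp only [hexp, image_comp, mul_div_assoc]
  constructor
  · rintro ⟨θ, h⟩
    obtain ⟨T, hTS, hTfin, hT⟩ := exists_finite_angleBalanced_of_zero_mem_convexHull h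
    have hwin : (ρ * ·) '' (M ∩ Icc θ (θ + 2 * (π / ρ))) ⊆ Icc (ρ * θ) (ρ * θ + 2 * π) := by
      refine (image_mono inter_subset_right).trans_eq ?_
      rw [image_mul_left_Icc' hρ₀, mul_add, mul_left_comm, mul_div_cancel₀ _ hρ₀.ne']
    obtain ⟨_, ha, _, hb, _, hc, habc⟩ := hT.exists_isBalancedTriple hTfin (hTS.trans hwin)
    obtain ⟨α, ⟨hα, -⟩, rfl⟩ := hTS ha
    obtain ⟨β, ⟨hβ, -⟩, rfl⟩ := hTS hb
    obtain ⟨γ, ⟨hγ, -⟩, rfl⟩ := hTS hc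
    exact ⟨α, β, γ, hα, hβ, hγ, (isBalancedTriple_mul_iff hρ₀ π α β γ).1 habc⟩
  · rintro ⟨α, β, γ, hα, hβ, hγ, h⟩
    have hM : {α, β, γ} ⊆ M :=
      insert_subset_iff.2 ⟨hα, insert_subset_iff.2 ⟨hβ, singleton_subset_iff.2 hγ⟩⟩
    have hwin : {α, β, γ} ⊆ M ∩ Icc α (α + 2 * (π / ρ)) :=
      subset_inter hM (IsBalancedTriple.subset_Icc h)
    refine ⟨α, convexHull_mono (image_mono (image_mono hwin)) ?_⟩
    simpa only [image_insert_eq, image_singleton] using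
      zero_mem_convexHull_exp_of_isBalancedTriple ((isBalancedTriple_mul_iff hρ₀ π α β γ).2 h)
end
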